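/- arXiv:1103.4817 — 3 statements merged into one kernel-verified Lean document; each statement's English description precedes it below -/
import Mathlib

section
/- A nontrivial word w in a free group F(X) is proper (i.e., there exist groups G and H with w[G] ≠ {1} and w[H] ≠ H) if and only if e(w) ≠ 1, where e(w) is the gcd of the exponent sums of the generators in w. -/
/-!
A homomorphism from `F(X)` to an abelian group sees a word only through its exponent sums.
If `e(w) = 1`, Bézout gives integers `cᵢ` with `∑ tᵢ cᵢ = 1`, and `xᵢ ↦ g ^ cᵢ` sends `w` to any
prescribed `g`, so `w[H] = H` for every group `H`. If `e(w) ≠ 1`, then `w[F(X)] ∋ w ≠ 1`, while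
in the nontrivial group `ℤ/e(w)` every exponent sum vanishes, so `w[ℤ/e(w)] = {0}`.
-/

open Pointwise

/-- The verbal set `w[G]`: all values of the word `w` in `G`. -/
def verbalSet (w : FreeGroup ℕ) (G : Type*) [Group G] : Set G :=
  {g | ∃ φ : FreeGroup ℕ →* G, φ w = g}

/-- Exponent sums of a word in the generators, as a finitely supported function. -/
noncomputable def expSum (w : FreeGroup ℕ) : ℕ →₀ ℤ :=
  Multiplicative.toAdd
    ((FreeGroup.lift fun i => Multiplicative.ofAdd (Finsupp.single i (1 : ℤ))) w)

/-- `e(w)`: the gcd of the exponent sums of the generators in `w` (0 if all are 0). -/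
noncomputable def eWord (w : FreeGroup ℕ) : ℕ :=
  (expSum w).support.gcd fun i => ((expSum w) i).natAbs

/-- A word is proper if `w[G] ≠ {1}` and `w[H] ≠ H` for some groups `G`, `H`. -/
def IsProperWord (w : FreeGroup ℕ) : Prop :=
  ∃ (G : Type) (_ : Group G) (H : Type) (_ : Group H),
    verbalSet w G ≠ {1} ∧ verbalSet w H ≠ Set.univ

theorem Finset.natCast_gcd_natAbs {ι : Type*} (s : Finset ι) (f : ι → ℤ) :
    ((s.gcd fun i => (f i).natAbs : ℕ) : ℤ) = s.gcd f := by
  classical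
  induction s using Finset.induction_on with
  | empty => simp
  | insert a s _ ih =>
    rw [gcd_insert, gcd_insert, ← ih, ← Int.coe_gcd, Int.gcd_def,
      Int.natAbs_natCast]
    rfl

theorem intCast_eWord_dvd_expSum (w : FreeGroup ℕ) (i : ℕ) : (eWord w : ℤ) ∣ expSum w i := by
  by_cases hi : i ∈ (expSum w).support
  · exact Int.natCast_dvd.2 (Finset.gcd_dvd hi)
  · simp [Finsupp.notMem_support_iff.1 hi]

theorem exists_sum_expSum_mul_eq_eWord (w : FreeGroup ℕ) :
    ∃ c : ℕ → ℤ, (expSum w).sum (fun i n => n * c i) = eWord w := by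
  obtain ⟨c, hc⟩ := (expSum w).support.gcd_eq_sum_mul (expSum w)
  exact ⟨c, by rw [eWord, Finset.natCast_gcd_natAbs, hc]; rfl⟩

theorem toAdd_map_eq_sum_expSum {A : Type*} [AddCommGroup A]
    (φ : FreeGroup ℕ →* Multiplicative A) (w : FreeGroup ℕ) :
    (φ w).toAdd = (expSum w).sum fun i n => n • (φ (.of i)).toAdd := by
  have hφ : φ =
      (Finsupp.liftAddHom fun i => zmultiplesHom A (φ (.of i)).toAdd).toMultiplicative.comp
        (FreeGroup.lift fun i => Multiplicative.ofAdd (Finsupp.single i (1 : ℤ))) :=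
    FreeGroup.ext_hom _ _ fun i => by simp
  conv_lhs => rw [hφ]
  exact Finsupp.liftAddHom_apply _ (expSum w)

theorem mem_verbalSet_self (w : FreeGroup ℕ) : w ∈ verbalSet w (FreeGroup ℕ) :=
  ⟨MonoidHom.id _, rfl⟩

theorem verbalSet_eq_univ_of_eWord_eq_one {w : FreeGroup ℕ} (hw : eWord w = 1)
    (G : Type*) [Group G] : verbalSet w G = Set.univ := by
  refine Set.eq_univ_of_forall fun g => ?_
  obtain ⟨c, hc⟩ := exists_sum_expSum_mul_eq_eWord w
  let ψ : FreeGroup ℕ →* Multiplicative ℤ := FreeGroup.lift fun i => .ofAdd (c i)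
  have hψ : (ψ w).toAdd = 1 := by
    rw [toAdd_map_eq_sum_expSum, ← Nat.cast_one, ← hw, ← hc]
    simp [ψ]
  refine ⟨(zpowersHom G g).comp ψ, ?_⟩
  simp [hψ]

theorem map_eq_one_of_eWord_nsmul_eq_zero {A : Type*} [AddCommGroup A] {w : FreeGroup ℕ}
    (hA : ∀ a : A, eWord w • a = 0) (φ : FreeGroup ℕ →* Multiplicative A) : φ w = 1 := by
  apply Multiplicative.toAdd.injective
  rw [toAdd_map_eq_sum_expSum, toAdd_one]
  refine Finset.sum_eq_zero fun i _ => ?_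
  obtain ⟨k, hk⟩ := intCast_eWord_dvd_expSum w i
  simp only [hk, mul_comm, mul_zsmul, natCast_zsmul, hA, zsmul_zero]

theorem verbalSet_zmod_eWord (w : FreeGroup ℕ) :
    verbalSet w (Multiplicative (ZMod (eWord w))) = {1} := by
  refine Set.eq_singleton_iff_unique_mem.2 ⟨⟨1, rfl⟩, ?_⟩
  rintro _ ⟨φ, rfl⟩
  exact map_eq_one_of_eWord_nsmul_eq_zero (fun a => by simp) φ

/-- A nontrivial word is proper iff `e(w) ≠ 1`. -/
theorem stmt_0 (w : FreeGroup ℕ) (hw : w ≠ 1) : IsProperWord w ↔ eWord w ≠ 1 := by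
  constructor
  · rintro ⟨G, _, H, _, -, hH⟩ he
    exact hH (verbalSet_eq_univ_of_eWord_eq_one he H)
  · intro he
    have := ZMod.nontrivial_iff.2 he
    refine ⟨FreeGroup ℕ, inferInstance, Multiplicative (ZMod (eWord w)), inferInstance,
      ?_, ?_⟩
    · exact fun h => hw (by simpa [h] using mem_verbalSet_self w)
    · rw [verbalSet_zmod_eWord]
      exact Set.singleton_ne_univ 1
end

section
/- Every rational subset L of a monoid M can be written in the form L = ⋃_{i=1}^{k} a_{i1}·E_{i1}* ··· a_{it_i}·E_{it_i}*·a_{i,t_i+1}, where all a_{ij} ∈ M and each E_{ij} is a rational subset of M. -/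
open Pointwise

/-- Rational subsets of a monoid: the smallest family containing the finite sets and
closed under union, product and submonoid generation (Kleene star). -/
inductive IsRational {M : Type*} [Monoid M] : Set M → Prop
  | finite (s : Set M) (h : s.Finite) : IsRational s
  | union {s t : Set M} : IsRational s → IsRational t → IsRational (s ∪ t)
  | mul {s t : Set M} : IsRational s → IsRational t → IsRational (s * t)
  | star {s : Set M} : IsRational s → IsRational (Submonoid.closure s : Set M)

/-- The set `a 0 * (E 0)* * a 1 * (E 1)* * ⋯ * (E (n-1))* * a n`. -/
def chain {M : Type*} [Monoid M] :
    (n : ℕ) → (Fin (n + 1) → M) → (Fin n → Set M) → Set M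
  | 0, a, _ => {a 0}
  | n + 1, a, E =>
      ({a 0} : Set M) * (Submonoid.closure (E 0) : Set M) *
        chain n (fun i => a i.succ) (fun i => E i.succ)

/-!
The family of finite unions of sets `a₁ E₁* ⋯ a_t E_t* a_{t+1}` with rational `Eᵢ` contains
the finite sets (unions of singletons), is closed under union, and under star since
`E* = 1 E* 1`. It is closed under product because a product of two such chains is again one:
the last constant of the first merges with the first constant of the second.
-/

section

variable {M : Type*} [Monoid M]

inductive IsRationalChain : Set M → Prop
  | singleton (a : M) : IsRationalChain {a}
  | cons (a : M) {E S : Set M} :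
      IsRational E → IsRationalChain S →
        IsRationalChain ({a} * (Submonoid.closure E : Set M) * S)

namespace IsRationalChain

theorem singleton_mul {S : Set M} (hS : IsRationalChain S) (a : M) :
    IsRationalChain ({a} * S) := by
  cases hS with
  | singleton b => simpa only [Set.singleton_mul_singleton] using singleton (a * b)
  | cons b hE hS =>
    simpa only [← mul_assoc, Set.singleton_mul_singleton] using cons (a * b) hE hS

theorem mul {S T : Set M} (hS : IsRationalChain S) (hT : IsRationalChain T) :
    IsRationalChain (S * T) := by
  induction hS with
  | singleton a => exact hT.singleton_mul a
  | cons a hE _ ih => simpa only [mul_assoc] using cons a hE ih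

theorem exists_eq_chain {S : Set M} (hS : IsRationalChain S) :
    ∃ (n : ℕ) (a : Fin (n + 1) → M) (E : Fin n → Set M),
      (∀ j, IsRational (E j)) ∧ S = chain n a E := by
  induction hS with
  | singleton a => exact ⟨0, fun _ => a, Fin.elim0, fun j => j.elim0, rfl⟩
  | @cons a E S hE _ ih =>
    obtain ⟨n, b, F, hF, rfl⟩ := ih
    exact ⟨n + 1, Fin.cons a b, Fin.cons E F, Fin.cases hE hF, rfl⟩

end IsRationalChain

theorem isRationalChain_closure {E : Set M} (hE : IsRational E) :
    IsRationalChain (Submonoid.closure E : Set M) := by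
  simpa only [Set.singleton_one, one_mul, mul_one] using
    IsRationalChain.cons 1 hE (IsRationalChain.singleton 1)

theorem IsRational.exists_sUnion_rationalChain {L : Set M} (hL : IsRational L) :
    ∃ 𝒮 : Set (Set M), 𝒮.Finite ∧ (∀ S ∈ 𝒮, IsRationalChain S) ∧ L = ⋃₀ 𝒮 := by
  induction hL with
  | finite s hs =>
    refine ⟨(fun x => {x}) '' s, hs.image _, ?_, by simp⟩
    rintro _ ⟨x, -, rfl⟩
    exact IsRationalChain.singleton x
  | union _ _ ihs iht =>
    obtain ⟨𝒮, h𝒮, hS, rfl⟩ := ihs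
    obtain ⟨𝒯, h𝒯, hT, rfl⟩ := iht
    refine ⟨𝒮 ∪ 𝒯, h𝒮.union h𝒯, ?_, (Set.sUnion_union 𝒮 𝒯).symm⟩
    rintro S (hS' | hT')
    exacts [hS S hS', hT S hT']
  | mul _ _ ihs iht =>
    obtain ⟨𝒮, h𝒮, hS, rfl⟩ := ihs
    obtain ⟨𝒯, h𝒯, hT, rfl⟩ := iht
    refine ⟨Set.image2 (· * ·) 𝒮 𝒯, h𝒮.image2 _ h𝒯, ?_, ?_⟩
    · rintro _ ⟨S, hS', T, hT', rfl⟩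
      exact (hS S hS').mul (hT T hT')
    · rw [Set.sUnion_image2, Set.sUnion_mul]
      simp only [Set.mul_sUnion]
  | star hE _ =>
    refine ⟨{_}, Set.finite_singleton _, ?_, (Set.sUnion_singleton _).symm⟩
    rintro S rfl
    exact isRationalChain_closure hE

end

/-- Every rational subset of a monoid is a finite union of sets of the form
`a₁ E₁* a₂ E₂* ⋯ a_t E_t* a_{t+1}` with the `Eᵢ` rational. -/
theorem stmt_4 {M : Type*} [Monoid M] (L : Set M) (hL : IsRational L) :
    ∃ (k : ℕ) (t : Fin k → ℕ) (a : (i : Fin k) → Fin (t i + 1) → M)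
      (E : (i : Fin k) → Fin (t i) → Set M),
      (∀ i j, IsRational (E i j)) ∧ L = ⋃ i : Fin k, chain (t i) (a i) (E i) := by
  obtain ⟨𝒮, h𝒮, hchain, rfl⟩ := hL.exists_sUnion_rationalChain
  obtain ⟨k, S, -, rfl⟩ := h𝒮.fin_param
  choose t a E hE hS using fun i => (hchain (S i) ⟨i, rfl⟩).exists_eq_chain
  refine ⟨k, t, a, E, hE, ?_⟩
  rw [Set.sUnion_range]
  exact Set.iUnion_congr hS
end

section
/- Let F₂ be the free group of rank 2 with basis X₂ = {x₁, x₂}, and let X₂* be the free submonoid of F₂ generated by X₂. If L̄ is a rational subset of F₂, then L̄ ∩ X₂* is a rational subset of the free monoid X₂*. -/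
/-!
A rational subset of `F₂` is the set of labels of the accepted paths of a finite automaton whose
edges are labelled by `1` and the letters `xᵢ^{±1}`. Multiplying on the left by such a label
changes the last letter of a reduced word only by passing through `1`; hence an accepted path
whose label is a positive word `x_{i₁} ⋯ x_{iₙ}` splits into consecutive subpaths labelled
`x_{i₁}, …, x_{iₙ}, 1`. Adding an edge `q → q'` labelled `xᵢ` whenever some path from `q` to
`q'` has label `xᵢ`, and making final every state from which a path labelled `1` reaches a
final state, gives a finite automaton over `X₂*` that accepts exactly `L̄ ∩ X₂*` (Benois). Its
language is rational by Kleene's theorem, proved by the McNaughton–Yamada recursion on the set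
of states allowed as intermediate states of a path.
-/

open Pointwise

theorem IsRational.biUnion {M ι : Type*} [Monoid M] {s : Set ι} (hs : s.Finite)
    {f : ι → Set M} (h : ∀ i ∈ s, IsRational (f i)) : IsRational (⋃ i ∈ s, f i) := by
  induction s, hs using Set.Finite.induction_on with
  | empty => simpa using IsRational.finite (∅ : Set M) Set.finite_empty
  | insert _ _ ih =>
    rw [Set.biUnion_insert]
    exact (h _ (Set.mem_insert _ _)).union (ih fun i hi => h i (Set.mem_insert_of_mem _ hi))

/-- Only the states are required to be finite; edges carry arbitrary elements of `N`, and a path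
is labelled by the product of its edge labels. -/
structure Automaton (N : Type*) where
  State : Type
  [finite : Finite State]
  Edge : State → N → State → Prop
  IsInit : State → Prop
  IsFinal : State → Prop

attribute [instance] Automaton.finite

namespace Automaton

variable {N : Type*} {A B : Automaton N} {S : Set N}

def LabelsIn (A : Automaton N) (S : Set N) : Prop :=
  ∀ ⦃q a q'⦄, A.Edge q a q' → a ∈ S

def empty : Automaton N where
  State := Empty
  Edge _ _ _ := False
  IsInit _ := False
  IsFinal _ := False

def single (a : N) : Automaton N where
  State := Bool
  Edge q b q' := q = false ∧ b = a ∧ q' = true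
  IsInit q := q = false
  IsFinal q := q = true

def union (A B : Automaton N) : Automaton N where
  State := A.State ⊕ B.State
  Edge
    | .inl q, a, .inl q' => A.Edge q a q'
    | .inr q, a, .inr q' => B.Edge q a q'
    | _, _, _ => False
  IsInit := Sum.elim A.IsInit B.IsInit
  IsFinal := Sum.elim A.IsFinal B.IsFinal

theorem labelsIn_single {a : N} (ha : a ∈ S) : (single a).LabelsIn S :=
  fun _ _ _ ⟨_, hb, _⟩ => hb ▸ ha

theorem LabelsIn.union (hA : A.LabelsIn S) (hB : B.LabelsIn S) : (A.union B).LabelsIn S := by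
  rintro (q | q) a (q' | q') e
  exacts [hA e, e.elim, e.elim, hB e]

section One

variable [One N]

def concat (A B : Automaton N) : Automaton N where
  State := A.State ⊕ B.State
  Edge
    | .inl q, a, .inl q' => A.Edge q a q'
    | .inr q, a, .inr q' => B.Edge q a q'
    | .inl q, a, .inr q' => a = 1 ∧ A.IsFinal q ∧ B.IsInit q'
    | .inr _, _, .inl _ => False
  IsInit := Sum.elim A.IsInit fun _ => False
  IsFinal := Sum.elim (fun _ => False) B.IsFinal

def star (A : Automaton N) : Automaton N where
  State := Option A.State
  Edge
    | some q, a, some q' => A.Edge q a q'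
    | none, a, some q' => a = 1 ∧ A.IsInit q'
    | some q, a, none => a = 1 ∧ A.IsFinal q
    | none, _, none => False
  IsInit p := p = none
  IsFinal p := p = none

theorem LabelsIn.concat (h₁ : 1 ∈ S) (hA : A.LabelsIn S) (hB : B.LabelsIn S) :
    (A.concat B).LabelsIn S := by
  rintro (q | q) a (q' | q') e
  exacts [hA e, e.1 ▸ h₁, e.elim, hB e]

theorem LabelsIn.star (h₁ : 1 ∈ S) (hA : A.LabelsIn S) : A.star.LabelsIn S := by
  rintro (_ | q) a (_ | q') e
  exacts [e.elim, e.1 ▸ h₁, e.1 ▸ h₁, hA e]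

end One

section Monoid

variable [Monoid N]

inductive Path (A : Automaton N) : A.State → N → A.State → Prop
  | nil (q : A.State) : Path A q 1 q
  | cons {q r q' : A.State} {a g : N} : A.Edge q a r → Path A r g q' → Path A q (a * g) q'

def lang (A : Automaton N) : Set N :=
  {g | ∃ q q', A.IsInit q ∧ A.IsFinal q' ∧ A.Path q g q'}

namespace Path

theorem single {q q' : A.State} {a : N} (h : A.Edge q a q') : A.Path q a q' :=
  mul_one a ▸ .cons h (.nil q')

theorem append {q r q' : A.State} {g h : N} (h₁ : A.Path q g r) (h₂ : A.Path r h q') :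
    A.Path q (g * h) q' := by
  induction h₁ with
  | nil => rwa [one_mul]
  | @cons _ _ _ a g e _ ih => exact (mul_assoc a g h).symm ▸ .cons e (ih h₂)

theorem map (f : A.State → B.State) (hf : ∀ q a r, A.Edge q a r → B.Edge (f q) a (f r))
    {q q' : A.State} {g : N} (h : A.Path q g q') : B.Path (f q) g (f q') := by
  induction h with
  | nil => exact .nil _
  | cons e _ ih => exact .cons (hf _ _ _ e) ih

theorem lift (f : A.State → B.State)
    (hf : ∀ q a p, B.Edge (f q) a p → ∃ r, p = f r ∧ A.Edge q a r)
    {p p' : B.State} {g : N} (h : B.Path p g p') :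
    ∀ q, p = f q → ∃ r, p' = f r ∧ A.Path q g r := by
  induction h with
  | nil => exact fun q hq => ⟨q, hq, .nil q⟩
  | cons e _ ih =>
    rintro q rfl
    obtain ⟨r, rfl, e'⟩ := hf _ _ _ e
    obtain ⟨r', rfl, h'⟩ := ih r rfl
    exact ⟨r', rfl, .cons e' h'⟩

end Path

theorem lang_empty : (empty : Automaton N).lang = ∅ :=
  Set.eq_empty_of_forall_notMem fun _ ⟨q, _⟩ => q.elim

theorem lang_single (a : N) : (single a).lang = {a} := by
  ext g
  constructor
  · rintro ⟨_, _, rfl, rfl, _ | ⟨⟨-, rfl, rfl⟩, _ | ⟨⟨h, -⟩, -⟩⟩⟩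
    · exact mul_one _
    · cases h
  · rintro rfl
    exact ⟨false, true, rfl, rfl, .single ⟨rfl, rfl, rfl⟩⟩

theorem Path.of_union_inl {q : A.State} {p : (A.union B).State} {g : N}
    (h : (A.union B).Path (.inl q) g p) : ∃ r, p = .inl r ∧ A.Path q g r :=
  h.lift Sum.inl (by rintro q a (r | r) e <;> first | exact ⟨r, rfl, e⟩ | exact e.elim) q rfl

theorem Path.of_union_inr {q : B.State} {p : (A.union B).State} {g : N}
    (h : (A.union B).Path (.inr q) g p) : ∃ r, p = .inr r ∧ B.Path q g r :=
  h.lift Sum.inr (by rintro q a (r | r) e <;> first | exact ⟨r, rfl, e⟩ | exact e.elim) q rfl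

theorem lang_union (A B : Automaton N) : (A.union B).lang = A.lang ∪ B.lang := by
  ext g
  constructor
  · rintro ⟨q | q, p, hq, hp, hg⟩
    · obtain ⟨r, rfl, h⟩ := hg.of_union_inl
      exact .inl ⟨q, r, hq, hp, h⟩
    · obtain ⟨r, rfl, h⟩ := hg.of_union_inr
      exact .inr ⟨q, r, hq, hp, h⟩
  · rintro (⟨q, q', hq, hq', h⟩ | ⟨q, q', hq, hq', h⟩)
    · exact ⟨.inl q, .inl q', hq, hq', h.map (B := A.union B) Sum.inl fun _ _ _ e => e⟩
    · exact ⟨.inr q, .inr q', hq, hq', h.map (B := A.union B) Sum.inr fun _ _ _ e => e⟩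

theorem Path.of_concat_inr {q : B.State} {p : (A.concat B).State} {g : N}
    (h : (A.concat B).Path (.inr q) g p) : ∃ r, p = .inr r ∧ B.Path q g r :=
  h.lift Sum.inr (by rintro q a (r | r) e <;> first | exact ⟨r, rfl, e⟩ | exact e.elim) q rfl

theorem Path.exists_of_concat {p p' : (A.concat B).State} {g : N} (h : (A.concat B).Path p g p') :
    ∀ q q', p = .inl q → p' = .inr q' → ∃ r s g₁ g₂, A.Path q g₁ r ∧ A.IsFinal r ∧
      B.IsInit s ∧ B.Path s g₂ q' ∧ g₁ * g₂ = g := by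
  induction h with
  | nil => rintro q q' rfl ⟨⟩
  | @cons p p₁ p' a g e h ih =>
    rintro q q' rfl rfl
    rcases p₁ with r | s
    · obtain ⟨r', s, g₁, g₂, h₁, hr', hs, h₂, rfl⟩ := ih r q' rfl rfl
      exact ⟨r', s, a * g₁, g₂, .cons e h₁, hr', hs, h₂, mul_assoc a g₁ g₂⟩
    · obtain ⟨rfl, hq, hs⟩ := e
      obtain ⟨r, ⟨⟩, h₂⟩ := h.of_concat_inr
      exact ⟨q, s, 1, g, .nil q, hq, hs, h₂, rfl⟩

theorem lang_concat (A B : Automaton N) : (A.concat B).lang = A.lang * B.lang := by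
  ext g
  constructor
  · rintro ⟨q | q, q' | q', hq, hq', h⟩
    · exact hq'.elim
    · obtain ⟨r, s, g₁, g₂, h₁, hr, hs, h₂, rfl⟩ := h.exists_of_concat q q' rfl rfl
      exact ⟨g₁, ⟨q, r, hq, hr, h₁⟩, g₂, ⟨s, q', hs, hq', h₂⟩, rfl⟩
    · exact hq.elim
    · exact hq.elim
  · rintro ⟨g₁, ⟨q, r, hq, hr, h₁⟩, g₂, ⟨s, q', hs, hq', h₂⟩, rfl⟩
    refine ⟨.inl q, .inr q', hq, hq', one_mul g₂ ▸ ?_⟩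
    exact (h₁.map (B := A.concat B) Sum.inl fun _ _ _ e => e).append
      (.cons (A := A.concat B) (q := Sum.inl r) (r := Sum.inr s) ⟨rfl, hr, hs⟩
        (h₂.map (B := A.concat B) Sum.inr fun _ _ _ e => e))

/-- The second conjunct is the invariant: a prefix read in `A` from an initial state to the
current state `some q` completes, along the rest of the path, to an element of the closure. -/
theorem Path.mem_closure_of_star {p p' : A.star.State} {g : N} (h : A.star.Path p g p')
    (hp' : p' = none) :
    (p = none → g ∈ Submonoid.closure A.lang) ∧
      ∀ q, p = some q → ∀ q₀ g₀, A.IsInit q₀ → A.Path q₀ g₀ q →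
        g₀ * g ∈ Submonoid.closure A.lang := by
  induction h with
  | nil =>
    subst hp'
    exact ⟨fun _ => one_mem _, by rintro q ⟨⟩⟩
  | @cons p p₁ p' a g e _ ih =>
    obtain ⟨ih_none, ih_some⟩ := ih hp'
    rcases p with _ | q <;> rcases p₁ with _ | q₁
    · exact e.elim
    · obtain ⟨rfl, hq₁⟩ := e
      refine ⟨fun _ => ?_, by rintro q ⟨⟩⟩
      simpa using ih_some q₁ rfl q₁ 1 hq₁ (.nil q₁)
    · obtain ⟨rfl, hq⟩ := e
      refine ⟨by rintro ⟨⟩, ?_⟩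
      rintro _ ⟨⟩ q₀ g₀ hq₀ h₀
      rw [one_mul]
      exact mul_mem (Submonoid.subset_closure ⟨q₀, q, hq₀, hq, h₀⟩) (ih_none rfl)
    · refine ⟨by rintro ⟨⟩, ?_⟩
      rintro _ ⟨⟩ q₀ g₀ hq₀ h₀
      rw [← mul_assoc]
      exact ih_some q₁ rfl q₀ (g₀ * a) hq₀ (h₀.append (.single e))

theorem lang_star (A : Automaton N) : A.star.lang = Submonoid.closure A.lang := by
  ext g
  constructor
  · rintro ⟨_, _, rfl, rfl, h⟩
    exact (h.mem_closure_of_star rfl).1 rfl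
  · intro hg
    induction hg using Submonoid.closure_induction with
    | mem g hg =>
      obtain ⟨q, q', hq, hq', h⟩ := hg
      refine ⟨none, none, rfl, rfl, ?_⟩
      simpa using (Path.cons (A := A.star) (q := none) (r := some q) ⟨rfl, hq⟩
        ((h.map (B := A.star) some fun _ _ _ e => e).append
          (.single (A := A.star) (q := some q') (q' := none) ⟨rfl, hq'⟩)))
    | one => exact ⟨none, none, rfl, rfl, .nil (A := A.star) none⟩
    | mul g₁ g₂ _ _ ih₁ ih₂ =>
      obtain ⟨_, _, rfl, rfl, h₁⟩ := ih₁
      obtain ⟨_, _, rfl, rfl, h₂⟩ := ih₂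
      exact ⟨none, none, rfl, rfl, h₁.append h₂⟩

theorem exists_labelsIn_lang_eq_singleton (hS₁ : 1 ∈ S) (hS : Submonoid.closure S = ⊤)
    (g : N) : ∃ A : Automaton N, A.LabelsIn S ∧ A.lang = {g} := by
  induction (hS ▸ Submonoid.mem_top g : g ∈ Submonoid.closure S)
    using Submonoid.closure_induction with
  | mem a ha => exact ⟨single a, labelsIn_single ha, lang_single a⟩
  | one => exact ⟨single 1, labelsIn_single hS₁, lang_single 1⟩
  | mul a b _ _ iha ihb =>
    obtain ⟨A, hA, hAa⟩ := iha
    obtain ⟨B, hB, hBb⟩ := ihb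
    exact ⟨A.concat B, hA.concat hS₁ hB,
      by rw [lang_concat, hAa, hBb, Set.singleton_mul_singleton]⟩

theorem exists_labelsIn_lang_eq_of_finite (hS₁ : 1 ∈ S) (hS : Submonoid.closure S = ⊤)
    {L : Set N} (hL : L.Finite) : ∃ A : Automaton N, A.LabelsIn S ∧ A.lang = L := by
  induction L, hL using Set.Finite.induction_on with
  | empty => exact ⟨empty, fun q => q.elim, lang_empty⟩
  | @insert g L _ _ ih =>
    obtain ⟨A, hA, rfl⟩ := ih
    obtain ⟨B, hB, hBg⟩ := exists_labelsIn_lang_eq_singleton hS₁ hS g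
    exact ⟨B.union A, hB.union hA, by rw [lang_union, hBg, Set.singleton_union]⟩

theorem exists_labelsIn_lang_eq (hS₁ : 1 ∈ S) (hS : Submonoid.closure S = ⊤) {L : Set N}
    (hL : IsRational L) : ∃ A : Automaton N, A.LabelsIn S ∧ A.lang = L := by
  induction hL with
  | finite L hL => exact exists_labelsIn_lang_eq_of_finite hS₁ hS hL
  | union _ _ ih₁ ih₂ =>
    obtain ⟨A, hA, rfl⟩ := ih₁
    obtain ⟨B, hB, rfl⟩ := ih₂
    exact ⟨A.union B, hA.union hB, lang_union A B⟩
  | mul _ _ ih₁ ih₂ =>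
    obtain ⟨A, hA, rfl⟩ := ih₁
    obtain ⟨B, hB, rfl⟩ := ih₂
    exact ⟨A.concat B, hA.concat hS₁ hB, lang_concat A B⟩
  | star _ ih =>
    obtain ⟨A, hA, rfl⟩ := ih
    exact ⟨A.star, hA.star hS₁, lang_star A⟩

inductive PathVia (A : Automaton N) (X : Set A.State) : A.State → N → A.State → Prop
  | nil (q : A.State) : PathVia A X q 1 q
  | single {q q' : A.State} {a : N} : A.Edge q a q' → PathVia A X q a q'
  | cons {q r q' : A.State} {a g : N} :
      A.Edge q a r → r ∈ X → PathVia A X r g q' → PathVia A X q (a * g) q'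

namespace PathVia

variable {X Y : Set A.State} {q r q' : A.State} {g h : N}

theorem mono (hXY : X ⊆ Y) (hg : A.PathVia X q g q') : A.PathVia Y q g q' := by
  induction hg with
  | nil q => exact .nil q
  | single e => exact .single e
  | cons e hr _ ih => exact .cons e (hXY hr) ih

theorem trans (h₁ : A.PathVia X q g r) (hr : r ∈ X) (h₂ : A.PathVia X r h q') :
    A.PathVia X q (g * h) q' := by
  induction h₁ with
  | nil => rwa [one_mul]
  | single e => exact .cons e hr h₂
  | @cons _ _ _ a g e hs _ ih => exact (mul_assoc a g h).symm ▸ .cons e hs (ih hr h₂)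

end PathVia

theorem pathVia_univ_iff {q q' : A.State} {g : N} : A.PathVia .univ q g q' ↔ A.Path q g q' := by
  constructor
  · intro h
    induction h with
    | nil q => exact .nil q
    | single e => exact .single e
    | cons e _ _ ih => exact .cons e ih
  · intro h
    induction h with
    | nil q => exact .nil q
    | cons e _ ih => exact .cons e trivial ih

theorem setOf_pathVia_empty_subset (hA : A.LabelsIn S) (q q' : A.State) :
    {g | A.PathVia ∅ q g q'} ⊆ insert 1 S := by
  rintro g (_ | e | ⟨_, hr, _⟩)
  exacts [Set.mem_insert 1 S, Set.mem_insert_of_mem 1 (hA e), hr.elim]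

theorem setOf_pathVia_insert (X : Set A.State) (r q q' : A.State) :
    {g | A.PathVia (insert r X) q g q'} = {g | A.PathVia X q g q'} ∪
      {g | A.PathVia X q g r} * Submonoid.closure {g | A.PathVia X r g r} *
        {g | A.PathVia X r g q'} := by
  ext g
  constructor
  · intro hg
    induction hg with
    | nil q => exact .inl (.nil q)
    | single e => exact .inl (.single e)
    | @cons q s q' a g e hs _ ih =>
      rcases hs with rfl | hs
      · rcases ih with hg | ⟨_, ⟨x, hx, y, hy, rfl⟩, z, hz, rfl⟩
        · exact .inr ⟨a * 1, Set.mul_mem_mul (.single e) (one_mem _), g, hg, by rw [mul_one]⟩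
        · refine .inr ⟨a * (x * y), Set.mul_mem_mul (.single e) ?_, z, hz,
            by simp only [mul_assoc]⟩
          exact mul_mem (Submonoid.subset_closure hx) hy
      · rcases ih with hg | ⟨_, ⟨x, hx, y, hy, rfl⟩, z, hz, rfl⟩
        · exact .inl (.cons e hs hg)
        · exact .inr ⟨a * x * y, Set.mul_mem_mul (.cons e hs hx) hy, z, hz,
            by simp only [mul_assoc]⟩
  · rintro (hg | ⟨_, ⟨x, hx, y, hy, rfl⟩, z, hz, rfl⟩)
    · exact hg.mono (Set.subset_insert r X)
    have hyz : A.PathVia (insert r X) r (y * z) q' := by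
      induction hy using Submonoid.closure_induction_left with
      | one => simpa using hz.mono (Set.subset_insert r X)
      | mul_left u hu y _ ih =>
        exact (mul_assoc u y z).symm ▸
          (PathVia.mono (Set.subset_insert r X) hu).trans (Set.mem_insert r X) ih
    show A.PathVia (insert r X) q (x * y * z) q'
    exact (mul_assoc x y z).symm ▸
      (hx.mono (Set.subset_insert r X)).trans (Set.mem_insert r X) hyz

theorem isRational_setOf_pathVia (hS : S.Finite) (hA : A.LabelsIn S) {X : Set A.State}
    (hX : X.Finite) (q q' : A.State) : IsRational {g | A.PathVia X q g q'} := by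
  induction X, hX using Set.Finite.induction_on generalizing q q' with
  | empty => exact .finite _ ((hS.insert 1).subset (setOf_pathVia_empty_subset hA q q'))
  | @insert r X _ _ ih =>
    rw [setOf_pathVia_insert]
    exact (ih q q').union (((ih q r).mul (ih r r).star).mul (ih r q'))

theorem isRational_lang (hS : S.Finite) (hA : A.LabelsIn S) : IsRational A.lang := by
  have hlang : A.lang = ⋃ q ∈ {q | A.IsInit q}, ⋃ q' ∈ {q' | A.IsFinal q'},
      {g | A.PathVia .univ q g q'} := by
    ext g
    simp [lang, pathVia_univ_iff]
  rw [hlang]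
  exact .biUnion (Set.toFinite _) fun q _ => .biUnion (Set.toFinite _) fun q' _ =>
    isRational_setOf_pathVia hS hA Set.finite_univ q q'

end Monoid

end Automaton

namespace FreeGroup

def letters (α : Type*) : Set (FreeGroup α) := Set.range fun l : α × Bool => mk [l]

variable {α : Type*}

theorem closure_insert_one_letters : Submonoid.closure (insert 1 (letters α)) = ⊤ := by
  classical
  refine eq_top_iff.2 fun x _ => ?_
  rw [← mk_toWord (x := x)]
  induction x.toWord with
  | nil => exact one_mem _
  | cons l L ih =>
    exact mul_mk (L₁ := [l]) ▸
      mul_mem (Submonoid.subset_closure (Set.mem_insert_of_mem _ ⟨l, rfl⟩)) ih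

variable [DecidableEq α]

theorem getLast?_toWord_mk_singleton_mul (l : α × Bool) {g : FreeGroup α} (hg : g ≠ 1)
    (hlg : mk [l] * g ≠ 1) : (mk [l] * g).toWord.getLast? = g.toWord.getLast? := by
  rw [ne_eq, ← toWord_eq_nil_iff] at hg hlg
  rw [toWord_mul, toWord_mk, reduce_singleton, List.singleton_append, reduce.cons,
    reduce_toWord] at hlg ⊢
  rcases hw : g.toWord with _ | ⟨hd, tl⟩
  · exact absurd hw hg
  rw [hw] at hlg
  dsimp only at hlg ⊢
  split_ifs at hlg ⊢
  · rcases tl with _ | ⟨hd', tl⟩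
    · exact absurd rfl hlg
    · simp [List.getLast?_cons_cons]
  · simp [List.getLast?_cons_cons]

theorem snd_eq_true_of_mem_toWord {x : FreeGroup α}
    (hx : x ∈ Submonoid.closure (Set.range (of : α → FreeGroup α))) {l : α × Bool}
    (hl : l ∈ x.toWord) : l.2 = true := by
  induction hx using Submonoid.closure_induction generalizing l with
  | mem _ hx =>
    obtain ⟨a, rfl⟩ := hx
    rw [toWord_of, List.mem_singleton] at hl
    rw [hl]
  | one => simp at hl
  | mul x y _ _ ihx ihy =>
    rcases List.mem_append.1 ((toWord_mul_sublist x y).subset hl) with hl | hl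
    exacts [ihx hl, ihy hl]

end FreeGroup

namespace Automaton

open FreeGroup

variable {α : Type*} {A : Automaton (FreeGroup α)}

/-- Walking back from the end, the last letter of `g₂ * k`, with `g₂` the label of the remaining
subpath, is that of `k` at the start and `c` at the end. Left multiplication by `1` or a letter
keeps the last letter of a reduced word unless the word or the product is `1`, so `g₂ * k = 1`
somewhere in between. -/
theorem Path.exists_split [DecidableEq α] (hA : A.LabelsIn (insert 1 (letters α)))
    {q q' : A.State} {g : FreeGroup α} (h : A.Path q g q') {k : FreeGroup α} {c : α × Bool}
    (hc : (g * k).toWord.getLast? = some c) (hk : k.toWord.getLast? ≠ some c) :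
    ∃ r g₁ g₂, A.Path q g₁ r ∧ A.Path r g₂ q' ∧ g₁ * g₂ = g ∧ g₂ * k = 1 := by
  induction h with
  | nil => exact absurd (one_mul k ▸ hc) hk
  | @cons q r q' a g e h ih =>
    by_cases hgk : g * k = 1
    · exact ⟨r, a, g, .single e, h, rfl, hgk⟩
    by_cases hc' : (g * k).toWord.getLast? = some c
    · obtain ⟨r', g₁, g₂, h₁, h₂, rfl, hk'⟩ := ih hc'
      exact ⟨r', a * g₁, g₂, .cons e h₁, h₂, mul_assoc a g₁ g₂, hk'⟩
    exfalso
    rw [mul_assoc] at hc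
    rcases hA e with rfl | ⟨l, rfl⟩
    · exact hc' (one_mul (g * k) ▸ hc)
    · have hlgk : FreeGroup.mk [l] * (g * k) ≠ 1 := by
        rintro hlgk
        rw [hlgk, toWord_one] at hc
        cases hc
      exact hc' (getLast?_toWord_mk_singleton_mul l hgk hlgk ▸ hc)

theorem Path.exists_split_of_mem_closure (hA : A.LabelsIn (insert 1 (letters α)))
    {q q' : A.State} {i : α} {y : FreeGroup α} (h : A.Path q (of i * y) q')
    (hy : y ∈ Submonoid.closure (Set.range (of : α → FreeGroup α))) :
    ∃ r, A.Path q (of i) r ∧ A.Path r y q' := by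
  classical
  have hc : (of i * y * y⁻¹).toWord.getLast? = some (i, true) := by
    rw [mul_inv_cancel_right, toWord_of, List.getLast?_singleton]
  have hk : y⁻¹.toWord.getLast? ≠ some (i, true) := fun hlast => by
    obtain ⟨l, hl, hli⟩ := List.mem_map.1 (List.mem_reverse.1
      (toWord_inv y ▸ List.mem_of_getLast? hlast))
    have := snd_eq_true_of_mem_toWord hy hl
    simp_all
  obtain ⟨r, g₁, g₂, h₁, h₂, hg, hg₂⟩ := h.exists_split hA hc hk
  obtain rfl := mul_inv_eq_one.1 hg₂
  obtain rfl := mul_right_cancel hg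
  exact ⟨r, h₁, h₂⟩

def saturation (A : Automaton (FreeGroup α)) :
    Automaton (Submonoid.closure (Set.range (of : α → FreeGroup α))) where
  State := A.State
  Edge q m q' := ∃ i, (m : FreeGroup α) = of i ∧ A.Path q (of i) q'
  IsInit := A.IsInit
  IsFinal q := ∃ q', A.Path q 1 q' ∧ A.IsFinal q'

theorem labelsIn_saturation (A : Automaton (FreeGroup α)) :
    A.saturation.LabelsIn (Subtype.val ⁻¹' Set.range of) :=
  fun _ _ _ ⟨i, hi, _⟩ => ⟨i, hi.symm⟩

theorem Path.of_saturation {q q' : A.saturation.State}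
    {m : Submonoid.closure (Set.range (of : α → FreeGroup α))} (h : A.saturation.Path q m q') :
    A.Path q m q' := by
  induction h with
  | nil q => exact Path.nil (A := A) q
  | cons e _ ih =>
    obtain ⟨i, hi, hq⟩ := e
    rw [Submonoid.coe_mul, hi]
    exact hq.append ih

theorem Path.exists_saturation (hA : A.LabelsIn (insert 1 (letters α))) {y : FreeGroup α}
    (hy : y ∈ Submonoid.closure (Set.range (of : α → FreeGroup α))) {q q'' : A.State}
    (h : A.Path q y q'') : ∃ q', A.saturation.Path q ⟨y, hy⟩ q' ∧ A.Path q' 1 q'' := by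
  induction hy using Submonoid.closure_induction_left generalizing q with
  | one => exact ⟨q, .nil (A := A.saturation) q, h⟩
  | mul_left x hx y hy ih =>
    obtain ⟨i, rfl⟩ := hx
    obtain ⟨r, h₁, h₂⟩ := h.exists_split_of_mem_closure hA hy
    obtain ⟨q', h', hq'⟩ := ih h₂
    exact ⟨q', .cons (A := A.saturation) (r := r)
      (a := ⟨of i, Submonoid.subset_closure ⟨i, rfl⟩⟩) ⟨i, rfl, h₁⟩ h', hq'⟩

theorem lang_saturation (hA : A.LabelsIn (insert 1 (letters α))) :
    A.saturation.lang = Subtype.val ⁻¹' A.lang := by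
  ext ⟨y, hy⟩
  constructor
  · rintro ⟨q, q', hq, ⟨q'', h', hq''⟩, h⟩
    exact ⟨q, q'', hq, hq'', by simpa using h.of_saturation.append h'⟩
  · rintro ⟨q, q'', hq, hq'', h⟩
    obtain ⟨q', h', hq'⟩ := h.exists_saturation hA hy
    exact ⟨q, q', hq, ⟨q'', hq', hq''⟩, h'⟩

end Automaton

/-- If `L̄` is rational in the free group `F₂`, then `L̄ ∩ X₂*` is rational in the
free monoid `X₂*` generated by the basis. -/
theorem stmt_10 (L : Set (FreeGroup (Fin 2))) (hL : IsRational L) :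
    IsRational
      (M := Submonoid.closure (Set.range (FreeGroup.of : Fin 2 → FreeGroup (Fin 2))))
      (Subtype.val ⁻¹' L) := by
  obtain ⟨A, hA, rfl⟩ := Automaton.exists_labelsIn_lang_eq (Set.mem_insert 1 _)
    FreeGroup.closure_insert_one_letters hL
  rw [← Automaton.lang_saturation hA]
  exact A.saturation.isRational_lang
    ((Set.finite_range _).preimage Subtype.val_injective.injOn) A.labelsIn_saturation
end
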